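/- arXiv:2112.09191 — 8 statements merged into one kernel-verified Lean document; each statement's English description precedes it below -/
import Mathlib

section
/- Chain rule for GBFs with an outer differentiable function: if ψ: ℝ^n → ℝ is differentiable and φ: ℝ^p → ℝ^n is continuous and directionally differentiable, then Δ_{ψ∘φ}(β,γ) = Δ_ψ(φ(β), φ(γ)) + ⟨Δ_φ(β,γ), ∇ψ(φ(γ))⟩, where Δ_φ is defined componentwise. -/
open Filter Topology Set

noncomputable section

/-- One-sided directional derivative: `d` is the limit of `(ψ(β+εh)-ψ(β))/ε` as `ε → 0+`. -/
def HasDirDeriv {E : Type*} [AddCommGroup E] [Module ℝ E] (ψ : E → ℝ) (β h : E) (d : ℝ) : Prop :=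
  Tendsto (fun ε : ℝ => (ψ (β + ε • h) - ψ β) / ε) (𝓝[>] (0:ℝ)) (𝓝 d)

/-- Generalized Bregman function of `ψ` with directional-derivative function `δ`. -/
def GBF {E : Type*} [AddCommGroup E] [Module ℝ E] (ψ : E → ℝ) (δ : E → E → ℝ) (β γ : E) : ℝ :=
  ψ β - ψ γ - δ γ (β - γ)

/-- Chain rule for GBFs with an outer differentiable function:
the composition is directionally differentiable at  in the direction , and
`Δ_{ψ∘φ}(β,γ) = Δ_ψ(φ(β),φ(γ)) + ⟨Δ_φ(β,γ), ∇ψ(φ(γ))⟩`, where the inner product with the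
gradient is expressed by applying the (linear) derivative of ψ to the componentwise GBF of φ. -/
theorem gbf_chain_rule {n p : ℕ} (ψ : (Fin n → ℝ) → ℝ) (φ : (Fin p → ℝ) → (Fin n → ℝ))
    (hψ : Differentiable ℝ ψ) (hφc : Continuous φ)
    (δφ : (Fin p → ℝ) → (Fin p → ℝ) → (Fin n → ℝ))
    (hφ : ∀ β h i, HasDirDeriv (fun x => φ x i) β h (δφ β h i)) :
    ∀ β γ : Fin p → ℝ, ∃ d : ℝ,
      HasDirDeriv (fun x => ψ (φ x)) γ (β - γ) d ∧
      ψ (φ β) - ψ (φ γ) - d =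
        (ψ (φ β) - ψ (φ γ) - fderiv ℝ ψ (φ γ) (φ β - φ γ))
          + fderiv ℝ ψ (φ γ) (fun i => φ β i - φ γ i - δφ γ (β - γ) i) := by
  intro β γ
  set h : Fin p → ℝ := β - γ with hh
  set a : Fin n → ℝ := φ γ with ha
  set f := fderiv ℝ ψ a with hf
  set v : Fin n → ℝ := δφ γ h with hv
  set u : ℝ → (Fin n → ℝ) := fun ε => φ (γ + ε • h) with hu_def
  set w : ℝ → (Fin n → ℝ) := fun ε i => (u ε i - a i) / ε with hw_def
  have hw : Tendsto w (𝓝[>] (0:ℝ)) (𝓝 v) := by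
    rw [tendsto_pi_nhds]
    intro i
    exact hφ γ h i
  have hu : Tendsto u (𝓝[>] (0:ℝ)) (𝓝 a) := by
    have h1 : Tendsto (fun ε : ℝ => γ + ε • h) (𝓝[>] (0:ℝ)) (𝓝 γ) := by
      have : Tendsto (fun ε : ℝ => γ + ε • h) (𝓝 (0:ℝ)) (𝓝 γ) := by
        have := ((continuous_id.smul continuous_const :
          Continuous fun ε : ℝ => ε • h)).tendsto (0:ℝ)
        simpa using (tendsto_const_nhds.add this)
      exact this.mono_left nhdsWithin_le_nhds
    exact (hφc.tendsto γ).comp h1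
  have hd : HasFDerivAt ψ f a := (hψ a).hasFDerivAt
  have hueq : ∀ᶠ ε in 𝓝[>] (0:ℝ), u ε - a = ε • w ε := by
    filter_upwards [self_mem_nhdsWithin] with ε (hε : (0:ℝ) < ε)
    funext i
    simp only [Pi.sub_apply, Pi.smul_apply, hw_def, smul_eq_mul]
    field_simp
  have hO : (fun ε => u ε - a) =O[𝓝[>] (0:ℝ)] (fun ε : ℝ => ε) := by
    have hwO : w =O[𝓝[>] (0:ℝ)] (fun _ : ℝ => (1:ℝ)) := hw.isBigO_one ℝ
    have := (Asymptotics.isBigO_refl (fun ε : ℝ => ε) (𝓝[>] (0:ℝ))).smul hwO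
    refine (this.congr' (hueq.mono fun ε he => he.symm) ?_).mono le_rfl
    filter_upwards with ε; simp
  have hlo : (fun ε => ψ (u ε) - ψ a - f (u ε - a)) =o[𝓝[>] (0:ℝ)] (fun ε : ℝ => ε) :=
    (hd.isLittleO.comp_tendsto hu).trans_isBigO hO
  have h1 : Tendsto (fun ε => (ψ (u ε) - ψ a - f (u ε - a)) / ε) (𝓝[>] (0:ℝ)) (𝓝 0) :=
    hlo.tendsto_div_nhds_zero
  have h2 : Tendsto (fun ε => f (u ε - a) / ε) (𝓝[>] (0:ℝ)) (𝓝 (f v)) := by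
    have hcong : ∀ᶠ ε in 𝓝[>] (0:ℝ), f (w ε) = f (u ε - a) / ε := by
      filter_upwards [hueq, self_mem_nhdsWithin] with ε hε (hε' : (0:ℝ) < ε)
      rw [hε, map_smul]
      simp [smul_eq_mul]
      field_simp
    exact (((f.continuous.tendsto v).comp hw)).congr' hcong
  have hfin : Tendsto (fun ε => (ψ (u ε) - ψ a) / ε) (𝓝[>] (0:ℝ)) (𝓝 (f v)) := by
    have := h1.add h2
    rw [zero_add] at this
    refine this.congr (fun ε => ?_)
    ring
  refine ⟨f v, hfin, ?_⟩
  have hsub : (fun i => φ β i - φ γ i - v i) = (φ β - φ γ) - v := by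
    funext i; simp
  rw [hsub, map_sub f (φ β - φ γ) v]
  ring
end
end

section
/- Contraction of GBF idempotence under convexity: if ψ: ℝ^p → ℝ is convex, then the GBF of the function β ↦ Δ_ψ(β,α) satisfies Δ_{Δ_ψ(·,α)}(β,γ) ≤ Δ_ψ(β,γ) for all α, β, γ; if ψ is concave, the reverse inequality holds. -/
open Filter Topology Set

noncomputable section

lemma aux_convex_dirDeriv {E : Type*} [AddCommGroup E] [Module ℝ E] (ψ : E → ℝ) (α : E)
    (g : E → ℝ) (hc : ConvexOn ℝ Set.univ ψ) (hd : ∀ h, HasDirDeriv ψ α h (g h)) :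
    ConvexOn ℝ Set.univ g := by
  refine ⟨convex_univ, fun x _ y _ a b ha hb hab => ?_⟩
  have h1 := (hd x).const_mul a
  have h2 := (hd y).const_mul b
  refine le_of_tendsto_of_tendsto (hd (a • x + b • y)) (h1.add h2) ?_
  filter_upwards [self_mem_nhdsWithin] with ε (hε : 0 < ε)
  have he : a • (α + ε • x) + b • (α + ε • y) = α + ε • (a • x + b • y) := by
    rw [smul_add, smul_add, smul_smul, smul_smul, mul_comm a ε, mul_comm b ε,
      ← smul_smul, ← smul_smul, ← add_assoc, add_assoc (a • α), add_comm (ε • (a • x)),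
      ← add_assoc, ← add_smul, hab, one_smul, add_assoc, ← smul_add]
  have key : ψ (α + ε • (a • x + b • y)) - ψ α ≤
      a * (ψ (α + ε • x) - ψ α) + b * (ψ (α + ε • y) - ψ α) := by
    have h := hc.2 (mem_univ (α + ε • x)) (mem_univ (α + ε • y)) ha hb hab
    rw [he] at h
    simp only [smul_eq_mul] at h
    have hα : a * ψ α + b * ψ α = ψ α := by rw [← add_mul, hab, one_mul]
    linarith
  calc (ψ (α + ε • (a • x + b • y)) - ψ α) / ε
      ≤ (a * (ψ (α + ε • x) - ψ α) + b * (ψ (α + ε • y) - ψ α)) / ε := by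
        exact div_le_div_of_nonneg_right key hε.le |>.trans_eq rfl
    _ = a * ((ψ (α + ε • x) - ψ α) / ε) + b * ((ψ (α + ε • y) - ψ α) / ε) := by
        rw [add_div, mul_div_assoc, mul_div_assoc]

lemma aux_dirDeriv_le {E : Type*} [AddCommGroup E] [Module ℝ E] (g : E → ℝ)
    (hg : ConvexOn ℝ Set.univ g) (a v : E) (d : ℝ) (hd : HasDirDeriv g a v d) :
    d ≤ g (a + v) - g a := by
  refine le_of_tendsto hd ?_
  filter_upwards [Ioc_mem_nhdsGT_of_mem (Set.left_mem_Ico.2 one_pos)] with ε hε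
  obtain ⟨hε0, hε1⟩ := hε
  have he : (1 - ε) • a + ε • (a + v) = a + ε • v := by
    rw [sub_smul, one_smul, smul_add, ← add_assoc, sub_add_cancel]
  have h := hg.2 (mem_univ a) (mem_univ (a + v)) (show (0:ℝ) ≤ 1 - ε by linarith) hε0.le (show (1 - ε) + ε = 1 by ring)
  rw [he] at h
  simp only [smul_eq_mul] at h
  rw [div_le_iff₀ hε0]
  nlinarith [h]

lemma aux_core {E : Type*} [AddCommGroup E] [Module ℝ E] (ψ : E → ℝ) (δψ : E → E → ℝ)
    (hψ : ∀ β h, HasDirDeriv ψ β h (δψ β h)) (hc : ConvexOn ℝ Set.univ ψ)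
    (α : E) (δq : E → E → ℝ)
    (hq : ∀ β h, HasDirDeriv (fun x => GBF ψ δψ x α) β h (δq β h)) (β γ : E) :
    GBF (fun x => GBF ψ δψ x α) δq β γ ≤ GBF ψ δψ β γ := by
  have hgconv : ConvexOn ℝ Set.univ (δψ α) := aux_convex_dirDeriv ψ α (δψ α) hc (hψ α)
  have hdg : HasDirDeriv (δψ α) (γ - α) (β - γ) (δψ γ (β - γ) - δq γ (β - γ)) := by
    have hsub := (hψ γ (β - γ)).sub (hq γ (β - γ))
    refine Tendsto.congr (fun ε => ?_) hsub
    have harg : γ + ε • (β - γ) - α = (γ - α) + ε • (β - γ) := by abel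
    simp only [GBF, ← harg]
    ring
  have hkey := aux_dirDeriv_le (δψ α) hgconv (γ - α) (β - γ) _ hdg
  have harg2 : (γ - α) + (β - γ) = β - α := by abel
  rw [harg2] at hkey
  simp only [GBF]
  linarith

/-- Contraction of GBF idempotence under convexity (and expansion under concavity). -/
theorem gbf_idempotence_convex {p : ℕ} (ψ : (Fin p → ℝ) → ℝ)
    (δψ : (Fin p → ℝ) → (Fin p → ℝ) → ℝ)
    (hψ : ∀ β h, HasDirDeriv ψ β h (δψ β h)) :
    ∀ α : Fin p → ℝ, ∀ δq : (Fin p → ℝ) → (Fin p → ℝ) → ℝ,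
      (∀ β h, HasDirDeriv (fun x => GBF ψ δψ x α) β h (δq β h)) →
      ∀ β γ : Fin p → ℝ,
        (ConvexOn ℝ Set.univ ψ →
          GBF (fun x => GBF ψ δψ x α) δq β γ ≤ GBF ψ δψ β γ) ∧
        (ConcaveOn ℝ Set.univ ψ →
          GBF ψ δψ β γ ≤ GBF (fun x => GBF ψ δψ x α) δq β γ) := by
  intro α δq hq β γ
  constructor
  · intro hc
    exact aux_core ψ δψ hψ hc α δq hq β γ
  · intro hc
    set ψ' : (Fin p → ℝ) → ℝ := fun x => -ψ x with hψ'def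
    set δψ' : (Fin p → ℝ) → (Fin p → ℝ) → ℝ := fun b h => -(δψ b h) with hδψ'def
    set δq' : (Fin p → ℝ) → (Fin p → ℝ) → ℝ := fun b h => -(δq b h) with hδq'def
    have hψ' : ∀ b h, HasDirDeriv ψ' b h (δψ' b h) := by
      intro b h
      have := (hψ b h).neg
      refine Tendsto.congr (fun ε => ?_) this
      simp [ψ', neg_div]
      ring
    have hc' : ConvexOn ℝ Set.univ ψ' := hc.neg
    have hgbf : ∀ x, GBF ψ' δψ' x α = -(GBF ψ δψ x α) := by
      intro x; simp [GBF, ψ', δψ']; ring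
    have hq' : ∀ b h, HasDirDeriv (fun x => GBF ψ' δψ' x α) b h (δq' b h) := by
      intro b h
      have := (hq b h).neg
      refine Tendsto.congr (fun ε => ?_) this
      simp only [hgbf, δq', neg_div]
      ring
    have := aux_core ψ' δψ' hψ' hc' α δq' hq' β γ
    simp only [GBF, hgbf, ψ', δψ', δq'] at this ⊢
    linarith
end
end

section
/- Weak idempotence of the GBF operator: if ψ: ℝ^p → ℝ is directionally differentiable and α = (1−θ)γ + θβ with θ ≤ 0 or θ ≥ 1, then Δ_{Δ_ψ(·,α)}(β,γ) = Δ_ψ(β,γ). In particular Δ_{Δ_ψ(·,β)}(β,γ) = Δ_{Δ_ψ(·,γ)}(β,γ) = Δ_ψ(β,γ). -/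
open Filter Topology Set

noncomputable section

/-!
Write `h = β - γ`, so that `x - α = (t - θ) • h` at `x = γ + t • h`. The directional derivative
`δψ α` is positively homogeneous, hence `t ↦ δψ α (t • h)` is linear on each of the half-lines
`t ≥ 0` and `t ≤ 0`. The condition on `θ` says exactly that the parameter interval `[-θ, 1 - θ]` of
the segment from `γ` to `β` lies in one of them; let `c` be the slope there. On that segment the
GBF relative to `α` is `ψ` minus an affine function of slope `c`, so its directional derivative at
`γ` towards `β` is `δψ γ h - c`, and the two copies of `c` cancel in the GBF of the GBF.
-/

def PositivelyHomogeneous {E : Type*} [AddCommGroup E] [Module ℝ E] (φ : E → ℝ) : Prop :=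
  ∀ a : ℝ, 0 ≤ a → ∀ h, φ (a • h) = a * φ h

section DirDeriv

variable {E : Type*} [AddCommGroup E] [Module ℝ E] {f g : E → ℝ} {β h : E} {d e : ℝ}

theorem HasDirDeriv.unique (hd : HasDirDeriv f β h d) (he : HasDirDeriv f β h e) : d = e :=
  tendsto_nhds_unique hd he

theorem hasDirDeriv_zero (f : E → ℝ) (β : E) : HasDirDeriv f β 0 0 := by
  simp [HasDirDeriv]

theorem hasDirDeriv_const (c : ℝ) (β h : E) : HasDirDeriv (fun _ => c) β h 0 := by
  simp [HasDirDeriv]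

theorem HasDirDeriv.sub (hf : HasDirDeriv f β h d) (hg : HasDirDeriv g β h e) :
    HasDirDeriv (fun x => f x - g x) β h (d - e) :=
  (Tendsto.sub hf hg).congr fun ε => by ring

theorem HasDirDeriv.smul (hd : HasDirDeriv f β h d) {a : ℝ} (ha : 0 < a) :
    HasDirDeriv f β (a • h) (a * d) := by
  have hscale : Tendsto (fun ε : ℝ => ε * a) (𝓝[>] 0) (𝓝[>] 0) :=
    tendsto_nhdsWithin_of_tendsto_nhds_of_eventually_within _
      (by simpa using ((continuous_mul_const a).tendsto 0).mono_left nhdsWithin_le_nhds)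
      (eventually_nhdsWithin_of_forall fun ε hε => mul_pos hε ha)
  refine ((hd.comp hscale).const_mul a).congr' ?_
  filter_upwards [self_mem_nhdsWithin] with ε hε
  have hε : ε ≠ 0 := (mem_Ioi.mp hε).ne'
  simp only [Function.comp_apply, mul_smul]
  field_simp

theorem hasDirDeriv_of_eventually_affine {c : ℝ}
    (hg : ∀ᶠ ε in 𝓝[>] (0 : ℝ), g (β + ε • h) - g β = ε * c) : HasDirDeriv g β h c := by
  refine tendsto_const_nhds.congr' ?_
  filter_upwards [hg, self_mem_nhdsWithin] with ε hε hpos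
  rw [hε, mul_div_cancel_left₀ c (mem_Ioi.mp hpos).ne']

theorem positivelyHomogeneous_of_hasDirDeriv {δ : E → ℝ} (hδ : ∀ h, HasDirDeriv f β h (δ h)) :
    PositivelyHomogeneous δ := by
  intro a ha h
  rcases ha.eq_or_lt with rfl | ha
  · rw [zero_smul, zero_mul]
    exact (hδ 0).unique (hasDirDeriv_zero f β)
  · exact (hδ (a • h)).unique ((hδ h).smul ha)

end DirDeriv

theorem PositivelyHomogeneous.exists_slope_on_Icc {E : Type*} [AddCommGroup E] [Module ℝ E]
    {φ : E → ℝ} (hφ : PositivelyHomogeneous φ) (h : E) {a b : ℝ} (hab : 0 ≤ a ∨ b ≤ 0) :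
    ∃ c, ∀ t ∈ Icc a b, φ (t • h) = t * c := by
  rcases hab with ha | hb
  · exact ⟨φ h, fun t ht => hφ t (ha.trans ht.1) h⟩
  · refine ⟨-φ (-h), fun t ht => ?_⟩
    rw [← neg_smul_neg, hφ (-t) (by linarith [ht.2]) (-h)]
    ring

/-- Weak idempotence of the GBF operator. -/
theorem gbf_weak_idempotence {p : ℕ} (ψ : (Fin p → ℝ) → ℝ)
    (δψ : (Fin p → ℝ) → (Fin p → ℝ) → ℝ)
    (hψ : ∀ β h, HasDirDeriv ψ β h (δψ β h))
    (β γ α : Fin p → ℝ) (θ : ℝ) (hθ : θ ≤ 0 ∨ 1 ≤ θ)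
    (hα : α = (1 - θ) • γ + θ • β) :
    ∃ d : ℝ,
      HasDirDeriv (fun x => GBF ψ δψ x α) γ (β - γ) d ∧
      GBF ψ δψ β α - GBF ψ δψ γ α - d = GBF ψ δψ β γ := by
  have hline : ∀ t : ℝ, γ + t • (β - γ) - α = (t - θ) • (β - γ) := fun t => by rw [hα]; module
  have hγ : γ - α = (-θ) • (β - γ) := by rw [hα]; module
  have hβ : β - α = (1 - θ) • (β - γ) := by rw [hα]; module
  obtain ⟨c, hc⟩ := (positivelyHomogeneous_of_hasDirDeriv (hψ α)).exists_slope_on_Icc (β - γ)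
    (a := -θ) (b := 1 - θ) (by rcases hθ with hθ | hθ <;> [left; right] <;> linarith)
  have haffine : ∀ᶠ ε in 𝓝[>] (0 : ℝ),
      δψ α (γ + ε • (β - γ) - α) - δψ α (γ - α) = ε * c := by
    filter_upwards [Ioc_mem_nhdsGT one_pos] with ε hε
    rw [hline, hγ, hc _ ⟨by linarith [hε.1], by linarith [hε.2]⟩,
      hc _ ⟨le_rfl, by linarith⟩]
    ring
  refine ⟨δψ γ (β - γ) - c, ?_, ?_⟩
  · simpa [GBF] using ((hψ γ _).sub (hasDirDeriv_const _ _ _)).sub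
      (hasDirDeriv_of_eventually_affine haffine)
  · simp only [GBF]
    rw [hβ, hγ, hc _ ⟨by linarith, le_rfl⟩, hc _ ⟨le_rfl, by linarith⟩]
    ring
end
end

section
/- Surrogate triangle inequality: let g(β;β⁻) = f(β) + Δ_ψ(β,β⁻) with f, ψ directionally differentiable and each g(·;β^{(t)}) directionally differentiable, and let β^{(t+1)} ∈ argmin_β g(β;β^{(t)}). Then for any β: f(β) + Δ_ψ(β,β^{(t)}) ≥ f(β^{(t+1)}) + Δ_ψ(β^{(t+1)},β^{(t)}) + (Δ_{Δ_ψ(·,β^{(t)})} + Δ_f)(β, β^{(t+1)}). -/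
open Filter Topology Set

noncomputable section

/-- Surrogate triangle inequality for one step of a Bregman-surrogate algorithm. -/
theorem surrogate_triangle_inequality {p : ℕ} (f ψ : (Fin p → ℝ) → ℝ)
    (δf δψ : (Fin p → ℝ) → (Fin p → ℝ) → ℝ)
    (hf : ∀ β h, HasDirDeriv f β h (δf β h))
    (hψ : ∀ β h, HasDirDeriv ψ β h (δψ β h))
    (βt βt1 : Fin p → ℝ)
    (δq : (Fin p → ℝ) → (Fin p → ℝ) → ℝ)
    (hq : ∀ β h, HasDirDeriv (fun x => GBF ψ δψ x βt) β h (δq β h))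
    (hmin : ∀ x, f βt1 + GBF ψ δψ βt1 βt ≤ f x + GBF ψ δψ x βt) :
    ∀ β : Fin p → ℝ,
      f βt1 + GBF ψ δψ βt1 βt
        + (GBF (fun x => GBF ψ δψ x βt) δq β βt1 + GBF f δf β βt1)
      ≤ f β + GBF ψ δψ β βt := by
  intro β
  set h : Fin p → ℝ := β - βt1 with hh
  set q : (Fin p → ℝ) → ℝ := fun x => GBF ψ δψ x βt with hqq
  -- The combined directional derivative at the minimizer is nonnegative.
  have hsum : Tendsto (fun ε : ℝ =>
      ((f (βt1 + ε • h) + q (βt1 + ε • h)) - (f βt1 + q βt1)) / ε)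
      (𝓝[>] (0:ℝ)) (𝓝 (δf βt1 h + δq βt1 h)) := by
    have := (hf βt1 h).add (hq βt1 h)
    convert this using 2 with ε
    ring
  have hnonneg : 0 ≤ δf βt1 h + δq βt1 h := by
    refine le_of_tendsto_of_tendsto tendsto_const_nhds hsum ?_
    filter_upwards [self_mem_nhdsWithin] with ε (hε : 0 < ε)
    have := hmin (βt1 + ε • h)
    have : 0 ≤ (f (βt1 + ε • h) + q (βt1 + ε • h)) - (f βt1 + q βt1) := by
      simpa [hqq] using sub_nonneg.mpr this
    positivity
  have key : GBF q δq β βt1 + GBF f δf β βt1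
      ≤ (f β + q β) - (f βt1 + q βt1) := by
    simp only [GBF]
    have : δf βt1 (β - βt1) + δq βt1 (β - βt1) = δf βt1 h + δq βt1 h := by rw [hh]
    nlinarith [hnonneg]
  have : f βt1 + q βt1 + (GBF q δq β βt1 + GBF f δf β βt1) ≤ f β + q β := by linarith
  simpa [hqq] using this
end
end

section
/- Universal O(1/T) convergence of Bregman-surrogate algorithms: for f, ψ directionally differentiable, β^{(t+1)} ∈ argmin_β [f(β) + Δ_ψ(β,β^{(t)})], the running average satisfies avg_{0≤t≤T} (2 Δ̄_ψ + Δ_f)(β^{(t)}, β^{(t+1)}) ≤ (f(β^{(0)}) − f(β^{(T+1)}))/(T+1) for all T ≥ 1, where Δ̄_ψ(β,γ) = (Δ_ψ(β,γ) + Δ_ψ(γ,β))/2 is the symmetrized GBF. -/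
open Filter Topology Set

noncomputable section

/-!
If `β⁺` minimizes the surrogate `F = f + Δ_ψ(·, β)`, the one-sided derivative of `F` at `β⁺`
towards `β` is nonnegative. By positive homogeneity of `δψ β`, this derivative is
`δf(β⁺; β - β⁺) + δψ(β⁺; β - β⁺) + δψ(β; β⁺ - β)`, so
`Δ_F(β, β⁺) = Δ_f(β, β⁺) + Δ_ψ(β, β⁺) + Δ_ψ(β⁺, β) ≤ F(β) - F(β⁺) ≤ f(β) - f(β⁺)`.
Summing this one-step descent along the iterates telescopes.
-/

namespace HasDirDeriv

variable {E : Type*} [AddCommGroup E] [Module ℝ E] {ψ φ : E → ℝ} {β h : E} {d e : ℝ}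

theorem unique_s12 (h₁ : HasDirDeriv ψ β h d) (h₂ : HasDirDeriv ψ β h e) : d = e :=
  tendsto_nhds_unique h₁ h₂

theorem add (hψ : HasDirDeriv ψ β h d) (hφ : HasDirDeriv φ β h e) :
    HasDirDeriv (fun x => ψ x + φ x) β h (d + e) :=
  (Tendsto.add hψ hφ).congr fun ε => by ring

theorem smul_dir {c : ℝ} (hc : 0 < c) (hd : HasDirDeriv ψ β h d) :
    HasDirDeriv ψ β (c • h) (c * d) := by
  have hscale : Tendsto (fun ε : ℝ => c * ε) (𝓝[>] 0) (𝓝[>] 0) := by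
    refine tendsto_nhdsWithin_of_tendsto_nhds_of_eventually_within _ ?_ ?_
    · simpa using (continuous_const_mul c).tendsto' 0 0 (mul_zero c) |>.mono_left nhdsWithin_le_nhds
    · filter_upwards [self_mem_nhdsWithin] with ε hε using mul_pos hc hε
  refine ((hd.comp hscale).const_mul c).congr' ?_
  filter_upwards [self_mem_nhdsWithin] with ε (hε : 0 < ε)
  simp only [Function.comp_apply, smul_smul, mul_comm ε c]
  field_simp

theorem nonneg_of_forall_le (hd : HasDirDeriv ψ β h d) (hmin : ∀ x, ψ β ≤ ψ x) : 0 ≤ d := by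
  refine ge_of_tendsto hd ?_
  filter_upwards [self_mem_nhdsWithin] with ε (hε : 0 < ε)
  exact div_nonneg (sub_nonneg.2 (hmin _)) hε.le

end HasDirDeriv

section Bregman

variable {E : Type*} [AddCommGroup E] [Module ℝ E] {ψ f : E → ℝ} {δψ δf : E → E → ℝ} {a b : E}

/-- Weak idempotence: along the segment from `a` to `b`, `x - b` is a positive multiple of
`a - b`, on which `δψ b` is linear. -/
theorem hasDirDeriv_gbf_toward {d : ℝ} (ha : HasDirDeriv ψ a (b - a) d)
    (hb : ∀ h, HasDirDeriv ψ b h (δψ b h)) :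
    HasDirDeriv (fun x => GBF ψ δψ x b) a (b - a) (d + δψ b (a - b)) := by
  refine (ha.add_const (δψ b (a - b))).congr' ?_
  filter_upwards [Ioo_mem_nhdsGT (zero_lt_one' ℝ)] with ε ⟨hε0, hε1⟩
  have hseg : a + ε • (b - a) - b = (1 - ε) • (a - b) := by module
  have hhom : δψ b ((1 - ε) • (a - b)) = (1 - ε) * δψ b (a - b) :=
    (hb _).unique_s12 ((hb (a - b)).smul_dir (sub_pos.2 hε1))
  simp only [GBF, hseg, hhom]
  field_simp
  ring

theorem gbf_add_gbf_add_gbf_le_of_forall_le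
    (hf : HasDirDeriv f a (b - a) (δf a (b - a)))
    (hψa : HasDirDeriv ψ a (b - a) (δψ a (b - a)))
    (hψb : ∀ h, HasDirDeriv ψ b h (δψ b h))
    (hmin : ∀ x, f a + GBF ψ δψ a b ≤ f x + GBF ψ δψ x b) :
    GBF ψ δψ b a + GBF ψ δψ a b + GBF f δf b a ≤ f b - f a := by
  have hstationary : 0 ≤ δf a (b - a) + (δψ a (b - a) + δψ b (a - b)) :=
    (hf.add (hasDirDeriv_gbf_toward hψa hψb)).nonneg_of_forall_le hmin
  simp only [GBF]
  linarith

end Bregman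

/-- Universal O(1/T) convergence of Bregman-surrogate algorithms: the running average of
(2Δ̄ψ + Δf)(β⁽ᵗ⁾, β⁽ᵗ⁺¹⁾) is at most (f(β⁽⁰⁾) − f(β⁽ᵀ⁺¹⁾))/(T+1). -/
theorem bregman_surrogate_rate {p : ℕ} (f ψ : (Fin p → ℝ) → ℝ)
    (δf δψ : (Fin p → ℝ) → (Fin p → ℝ) → ℝ)
    (hf : ∀ β h, HasDirDeriv f β h (δf β h))
    (hψ : ∀ β h, HasDirDeriv ψ β h (δψ β h))
    (β : ℕ → (Fin p → ℝ))
    (hmin : ∀ t : ℕ, ∀ x : Fin p → ℝ,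
      f (β (t+1)) + GBF ψ δψ (β (t+1)) (β t) ≤ f x + GBF ψ δψ x (β t)) :
    ∀ T : ℕ, 1 ≤ T →
      (∑ t ∈ Finset.range (T+1),
        (2 * ((GBF ψ δψ (β t) (β (t+1)) + GBF ψ δψ (β (t+1)) (β t)) / 2)
          + GBF f δf (β t) (β (t+1)))) / ((T : ℝ) + 1)
      ≤ (f (β 0) - f (β (T+1))) / ((T : ℝ) + 1) := by
  intro T _
  have hstep : ∀ t, 2 * ((GBF ψ δψ (β t) (β (t+1)) + GBF ψ δψ (β (t+1)) (β t)) / 2)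
      + GBF f δf (β t) (β (t+1)) ≤ f (β t) - f (β (t+1)) := fun t => by
    linarith [gbf_add_gbf_add_gbf_le_of_forall_le (hf _ _) (hψ _ _) (hψ (β t)) (hmin t)]
  gcongr
  calc _ ≤ ∑ t ∈ Finset.range (T+1), (f (β t) - f (β (t+1))) :=
        Finset.sum_le_sum fun t _ => hstep t
    _ = f (β 0) - f (β (T+1)) := Finset.sum_range_sub' (fun t => f (β t)) (T+1)
end
end

section
/- Mirror descent rate without convexity: in the mirror descent setup with surrogate g(β;β⁻) = f(β) + (ρ D_φ − Δ_f)(β,β⁻), suppose Δ_f ≤ L D̄_φ for some L > 0 (i.e., Δ_f(β,γ) ≤ L·(D_φ(β,γ)+D_φ(γ,β))/2 for all β,γ), inf_β f(β) ≥ 0, and ρ > L/2. Then avg_{0≤t≤T} D̄_φ(β^{(t)}, β^{(t+1)}) ≤ f(β^{(0)})/((T+1)(2ρ−L)). -/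
/-!
If `β⁺` minimises `g(·; β) = f β + δf β (· − β) + ρ D_φ(·, β)`, restrict `g` to the segment from `β`
to `β⁺`: positive homogeneity of directional derivatives makes the `δf` term linear there, so the
derivative at the endpoint `β⁺` is nonpositive, i.e.
`δf β (β⁺ − β) ≤ −ρ ⟪∇φ β⁺ − ∇φ β, β⁺ − β⟫ = −2ρ D̄_φ(β⁺, β)`.
With `Δ_f ≤ L D̄_φ` this is the descent `f β⁺ + (2ρ − L) D̄_φ(β⁺, β) ≤ f β`, which telescopes;
`f ≥ 0` then bounds the sum of the `D̄_φ` by `f β⁰ / (2ρ − L)`.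
-/

open Filter Topology Set RealInnerProductSpace

noncomputable section

/-- Bregman divergence of a differentiable function on Euclidean space. -/
def BregDiv {p : ℕ} (φ : EuclideanSpace ℝ (Fin p) → ℝ) (β γ : EuclideanSpace ℝ (Fin p)) : ℝ :=
  φ β - φ γ - ⟪gradient φ γ, β - γ⟫

section DirDeriv

variable {E : Type*} [AddCommGroup E] [Module ℝ E] {ψ : E → ℝ} {β : E}

lemma HasDirDeriv.unique_s13 {v : E} {d d' : ℝ} (h : HasDirDeriv ψ β v d)
    (h' : HasDirDeriv ψ β v d') : d = d' :=
  tendsto_nhds_unique h h'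

lemma HasDirDeriv.smul_dir_s13 {v : E} {d c : ℝ} (h : HasDirDeriv ψ β v d) (hc : 0 < c) :
    HasDirDeriv ψ β (c • v) (c * d) := by
  have hscale : Tendsto (fun ε : ℝ => c * ε) (𝓝[>] 0) (𝓝[>] 0) :=
    tendsto_comap.mono_left (comap_mulLeft_nhdsGT_zero hc).ge
  refine ((h.comp hscale).const_mul c).congr' ?_
  filter_upwards [self_mem_nhdsWithin] with ε (hε : 0 < ε)
  simp only [Function.comp_apply, smul_smul, mul_comm ε c]
  field_simp

lemma dirDeriv_smul_of_pos {δ : E → ℝ} (hδ : ∀ v, HasDirDeriv ψ β v (δ v)) {c : ℝ} (hc : 0 < c)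
    (v : E) : δ (c • v) = c * δ v :=
  (hδ (c • v)).unique_s13 ((hδ v).smul_dir_s13 hc)

end DirDeriv

lemma HasDerivAt.nonpos_of_forall_Ioo_le {h : ℝ → ℝ} {h' a b : ℝ} (hd : HasDerivAt h h' b)
    (hab : a < b) (hmin : ∀ s ∈ Ioo a b, h b ≤ h s) : h' ≤ 0 := by
  have hloc : IsLocalMinOn h (Ioc a b) b :=
    isMinOn_iff.2 (fun s hs => hs.2.eq_or_lt.elim (· ▸ le_rfl) (fun hsb => hmin s ⟨hs.1, hsb⟩))
      |>.localize
  have hcone : a - b ∈ posTangentConeAt (Ioc a b) b :=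
    sub_mem_posTangentConeAt_of_openSegment_subset
      (by rw [openSegment_symm, openSegment_eq_Ioo hab]; exact Ioo_subset_Ioc_self)
  have hslope := hloc.hasFDerivWithinAt_nonneg hd.hasFDerivAt.hasFDerivWithinAt hcone
  rw [ContinuousLinearMap.toSpanSingleton_apply, smul_eq_mul] at hslope
  exact nonpos_of_mul_nonneg_right hslope (sub_neg.2 hab)

section Bregman

variable {p : ℕ} {φ : EuclideanSpace ℝ (Fin p) → ℝ}

def symmBregDiv (φ : EuclideanSpace ℝ (Fin p) → ℝ) (β γ : EuclideanSpace ℝ (Fin p)) : ℝ :=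
  (BregDiv φ β γ + BregDiv φ γ β) / 2

lemma symmBregDiv_comm (β γ : EuclideanSpace ℝ (Fin p)) :
    symmBregDiv φ β γ = symmBregDiv φ γ β := by
  rw [symmBregDiv, symmBregDiv, add_comm]

lemma bregDiv_add_bregDiv_swap (β γ : EuclideanSpace ℝ (Fin p)) :
    BregDiv φ β γ + BregDiv φ γ β = ⟪gradient φ β - gradient φ γ, β - γ⟫ := by
  rw [BregDiv, BregDiv, ← neg_sub β γ, inner_neg_right, inner_sub_left]
  ring

lemma hasDerivAt_bregDiv_add_smul {γ d : EuclideanSpace ℝ (Fin p)} {s : ℝ}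
    (hφ : DifferentiableAt ℝ φ (γ + s • d)) :
    HasDerivAt (fun s : ℝ => BregDiv φ (γ + s • d) γ)
      ⟪gradient φ (γ + s • d) - gradient φ γ, d⟫ s := by
  have hline : HasDerivAt (fun s : ℝ => γ + s • d) d s := by
    simpa using ((hasDerivAt_id s).smul_const d).const_add γ
  have hφline : HasDerivAt (fun s : ℝ => φ (γ + s • d)) ⟪gradient φ (γ + s • d), d⟫ s := by
    have := hφ.hasFDerivAt.comp_hasDerivAt s hline
    rwa [hφ.hasGradientAt.fderiv_apply] at this
  have hform : (fun s : ℝ => BregDiv φ (γ + s • d) γ) =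
      fun s => φ (γ + s • d) - φ γ - s * ⟪gradient φ γ, d⟫ := by
    funext s
    rw [BregDiv, add_sub_cancel_left, inner_smul_right]
  rw [hform, inner_sub_left]
  exact (hφline.sub_const _).sub (by simpa using (hasDerivAt_id s).mul_const ⟪gradient φ γ, d⟫)

lemma mirror_step_variational_ineq {ℓ : EuclideanSpace ℝ (Fin p) → ℝ}
    (hℓ : ∀ c : ℝ, 0 < c → ∀ v, ℓ (c • v) = c * ℓ v) {ρ : ℝ} {β γ : EuclideanSpace ℝ (Fin p)}
    (hφ : DifferentiableAt ℝ φ β)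
    (hmin : ∀ x, ℓ (β - γ) + ρ * BregDiv φ β γ ≤ ℓ (x - γ) + ρ * BregDiv φ x γ) :
    ℓ (β - γ) + ρ * ⟪gradient φ β - gradient φ γ, β - γ⟫ ≤ 0 := by
  set d := β - γ
  have hβ : γ + (1 : ℝ) • d = β := by rw [one_smul, add_sub_cancel]
  let h : ℝ → ℝ := fun s => s * ℓ d + ρ * BregDiv φ (γ + s • d) γ
  have hd : HasDerivAt h (ℓ d + ρ * ⟪gradient φ β - gradient φ γ, d⟫) 1 := by
    have := ((hasDerivAt_id (1 : ℝ)).mul_const (ℓ d)).add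
      ((hasDerivAt_bregDiv_add_smul (hβ ▸ hφ)).const_mul ρ)
    rwa [one_mul, hβ] at this
  refine hd.nonpos_of_forall_Ioo_le zero_lt_one fun s hs => ?_
  have hx := hmin (γ + s • d)
  rw [add_sub_cancel_left, hℓ s hs.1] at hx
  simpa only [h, one_mul, hβ] using hx

end Bregman

section MirrorDescent

variable {p : ℕ} {f φ : EuclideanSpace ℝ (Fin p) → ℝ}
  {δf : EuclideanSpace ℝ (Fin p) → EuclideanSpace ℝ (Fin p) → ℝ}

def mirrorSurrogate (f φ : EuclideanSpace ℝ (Fin p) → ℝ)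
    (δf : EuclideanSpace ℝ (Fin p) → EuclideanSpace ℝ (Fin p) → ℝ) (ρ : ℝ)
    (β γ : EuclideanSpace ℝ (Fin p)) : ℝ :=
  f β + ρ * BregDiv φ β γ - GBF f δf β γ

lemma mirrorSurrogate_eq (ρ : ℝ) (β γ : EuclideanSpace ℝ (Fin p)) :
    mirrorSurrogate f φ δf ρ β γ = f γ + (δf γ (β - γ) + ρ * BregDiv φ β γ) := by
  rw [mirrorSurrogate, GBF]
  ring

lemma mirror_step_descent {L ρ : ℝ} {β γ : EuclideanSpace ℝ (Fin p)}
    (hf : ∀ v, HasDirDeriv f γ v (δf γ v)) (hφ : DifferentiableAt ℝ φ β)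
    (hsmooth : GBF f δf β γ ≤ L * symmBregDiv φ β γ)
    (hmin : IsMinOn (fun x => mirrorSurrogate f φ δf ρ x γ) univ β) :
    f β + (2 * ρ - L) * symmBregDiv φ β γ ≤ f γ := by
  have hvar := mirror_step_variational_ineq (fun c hc => dirDeriv_smul_of_pos hf hc) hφ
    fun x => by simpa only [mirrorSurrogate_eq, add_le_add_iff_left] using isMinOn_univ_iff.1 hmin x
  have hinner : ⟪gradient φ β - gradient φ γ, β - γ⟫ = 2 * symmBregDiv φ β γ := by
    rw [symmBregDiv, bregDiv_add_bregDiv_swap]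
    ring
  rw [hinner] at hvar
  rw [GBF] at hsmooth
  linear_combination hsmooth + hvar

end MirrorDescent

lemma mul_sum_range_le_sub_of_descent {u a : ℕ → ℝ} {c : ℝ} (h : ∀ t, u (t + 1) + c * a t ≤ u t)
    (n : ℕ) : c * ∑ t ∈ Finset.range n, a t ≤ u 0 - u n := by
  rw [Finset.mul_sum, ← Finset.sum_range_sub']
  exact Finset.sum_le_sum fun t _ => by linarith [h t]

theorem mirror_descent_rate_general {p : ℕ}
    (f φ : EuclideanSpace ℝ (Fin p) → ℝ)
    (hφ1 : ContDiff ℝ 1 φ)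
    (δf : EuclideanSpace ℝ (Fin p) → EuclideanSpace ℝ (Fin p) → ℝ)
    (hf : ∀ β h, HasDirDeriv f β h (δf β h))
    (L ρ : ℝ)
    (hsmooth : ∀ β γ, GBF f δf β γ ≤ L * ((BregDiv φ β γ + BregDiv φ γ β) / 2))
    (hinf : ∀ β, 0 ≤ f β)
    (hρ : L / 2 < ρ)
    (β : ℕ → EuclideanSpace ℝ (Fin p))
    (hmin : ∀ t : ℕ, ∀ x,
      f (β (t+1)) + ρ * BregDiv φ (β (t+1)) (β t) - GBF f δf (β (t+1)) (β t)
        ≤ f x + ρ * BregDiv φ x (β t) - GBF f δf x (β t)) :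
    ∀ T : ℕ,
      (∑ t ∈ Finset.range (T+1),
          (BregDiv φ (β t) (β (t+1)) + BregDiv φ (β (t+1)) (β t)) / 2) / ((T : ℝ) + 1)
        ≤ f (β 0) / (((T : ℝ) + 1) * (2 * ρ - L)) := by
  intro T
  change (∑ t ∈ Finset.range (T + 1), symmBregDiv φ (β t) (β (t + 1))) / _ ≤ _
  have hgap : 0 < 2 * ρ - L := by linarith
  have hstep (t : ℕ) : f (β (t + 1)) + (2 * ρ - L) * symmBregDiv φ (β t) (β (t + 1)) ≤ f (β t) :=
    symmBregDiv_comm (φ := φ) (β t) _ ▸ mirror_step_descent (hf (β t))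
      (hφ1.differentiable one_ne_zero _) (hsmooth _ _) (isMinOn_univ_iff.2 (hmin t))
  have hsum := mul_sum_range_le_sub_of_descent (u := fun t => f (β t)) hstep (T + 1)
  rw [mul_comm, ← div_div]
  refine div_le_div_of_nonneg_right ((le_div_iff₀ hgap).2 ?_) (by positivity)
  linarith [hinf (β (T + 1))]

/-- Mirror descent rate without convexity. -/
theorem mirror_descent_rate {p : ℕ}
    (f φ : EuclideanSpace ℝ (Fin p) → ℝ)
    (hφ1 : ContDiff ℝ 1 φ) (hφ2 : StrictConvexOn ℝ Set.univ φ)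
    (hfc : Continuous f)
    (δf : EuclideanSpace ℝ (Fin p) → EuclideanSpace ℝ (Fin p) → ℝ)
    (hf : ∀ β h, HasDirDeriv f β h (δf β h))
    (L ρ : ℝ) (hL : 0 < L)
    (hsmooth : ∀ β γ, GBF f δf β γ ≤ L * ((BregDiv φ β γ + BregDiv φ γ β) / 2))
    (hinf : ∀ β, 0 ≤ f β)
    (hρ : L / 2 < ρ)
    (β : ℕ → EuclideanSpace ℝ (Fin p))
    (hmin : ∀ t : ℕ, ∀ x,
      f (β (t+1)) + ρ * BregDiv φ (β (t+1)) (β t) - GBF f δf (β (t+1)) (β t)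
        ≤ f x + ρ * BregDiv φ x (β t) - GBF f δf x (β t)) :
    ∀ T : ℕ,
      (∑ t ∈ Finset.range (T+1),
          (BregDiv φ (β t) (β (t+1)) + BregDiv φ (β (t+1)) (β t)) / 2) / ((T : ℝ) + 1)
        ≤ f (β 0) / (((T : ℝ) + 1) * (2 * ρ - L)) :=
  mirror_descent_rate_general f φ hφ1 δf hf L ρ hsmooth hinf hρ β hmin
end
end

section
/- GBF of the hard-thresholding induced penalty in one dimension: for P with P(t) = P(−t) ≥ 0, P(0) = 0, P differentiable on (0,∞), P'_+(0) < ∞, the GBF of the map β ↦ Δ_P(β,α) satisfies Δ_{Δ_P(·,α)}(β,γ) = Δ_P(β,γ) − P'_+(0)·Δ_1(β,γ)·1_{α=0} for all α, β, γ ∈ ℝ, where Δ_1 is the GBF of the absolute value. In particular, Δ_{Δ_1(·,α)}(β,γ) = Δ_1(β,γ)·1_{α≠0}. -/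
open Filter Topology Set

noncomputable section

def absGBF (β γ : ℝ) : ℝ := if γ = 0 then 0 else |β| - Real.sign γ * β

lemma dd_unique {ψ : ℝ → ℝ} {β h d₁ d₂ : ℝ} (h₁ : HasDirDeriv ψ β h d₁)
    (h₂ : HasDirDeriv ψ β h d₂) : d₁ = d₂ := tendsto_nhds_unique h₁ h₂

lemma dd_sub {f g : ℝ → ℝ} {γ h d e : ℝ} (hf : HasDirDeriv f γ h d)
    (hg : HasDirDeriv g γ h e) : HasDirDeriv (fun x => f x - g x) γ h (d - e) :=
  Filter.Tendsto.congr (fun ε => by ring) (hf.sub hg)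

lemma dd_const_mul {f : ℝ → ℝ} {γ h d : ℝ} (c : ℝ) (hf : HasDirDeriv f γ h d) :
    HasDirDeriv (fun x => c * f x) γ h (c * d) :=
  Filter.Tendsto.congr (fun ε => by ring) (hf.const_mul c)

lemma dd_of_hasDerivAt {ψ : ℝ → ℝ} {γ d : ℝ} (hd : HasDerivAt ψ d γ) (h : ℝ) :
    HasDirDeriv ψ γ h (d * h) := by
  have hg : HasDerivAt (fun ε : ℝ => γ + ε * h) h 0 := by
    simpa using ((hasDerivAt_id (0:ℝ)).mul_const h).const_add γ
  have hc : HasDerivAt (fun ε : ℝ => ψ (γ + ε * h)) (d * h) 0 := by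
    have hd' : HasDerivAt ψ d (γ + 0 * h) := by simpa using hd
    exact hd'.comp 0 hg
  have ht := (hasDerivAt_iff_tendsto_slope.mp hc).mono_left
    (nhdsWithin_mono _ (fun x hx => ne_of_gt hx : Ioi (0:ℝ) ⊆ {0}ᶜ))
  refine ht.congr fun ε => ?_
  simp [slope_def_field, smul_eq_mul]

lemma tendsto_mul_pos {c : ℝ} (hc : 0 < c) :
    Tendsto (fun ε : ℝ => ε * c) (𝓝[>] (0:ℝ)) (𝓝[>] (0:ℝ)) := by
  rw [tendsto_nhdsWithin_iff]
  constructor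
  · have : Tendsto (fun ε : ℝ => ε * c) (𝓝 (0:ℝ)) (𝓝 (0*c)) :=
      (continuous_mul_right c).tendsto 0
    simpa using this.mono_left nhdsWithin_le_nhds
  · exact eventually_mem_nhdsWithin.mono fun x hx => mul_pos hx hc

lemma dd_abs (γ h : ℝ) :
    HasDirDeriv (fun x => |x|) γ h (if γ = 0 then |h| else Real.sign γ * h) := by
  rcases lt_trichotomy γ 0 with hγ | hγ | hγ
  · rw [if_neg hγ.ne, Real.sign_of_neg hγ]
    have hev : (fun x : ℝ => |x|) =ᶠ[𝓝 γ] fun x => -x := by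
      filter_upwards [eventually_lt_nhds hγ] with x hx
      exact abs_of_neg hx
    exact dd_of_hasDerivAt ((hasDerivAt_neg γ).congr_of_eventuallyEq hev) h
  · subst hγ
    rw [if_pos rfl]
    apply tendsto_const_nhds.congr'
    filter_upwards [eventually_mem_nhdsWithin] with ε (hε : (0:ℝ) < ε)
    rw [smul_eq_mul, zero_add, abs_zero, sub_zero, abs_mul, abs_of_pos hε]
    field_simp
  · rw [if_neg hγ.ne', Real.sign_of_pos hγ]
    have hev : (fun x : ℝ => |x|) =ᶠ[𝓝 γ] fun x => x := by
      filter_upwards [eventually_gt_nhds hγ] with x hx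
      exact abs_of_pos hx
    exact dd_of_hasDerivAt ((hasDerivAt_id γ).congr_of_eventuallyEq hev) h

lemma P_diffAt {P : ℝ → ℝ} (heven : ∀ t, P (-t) = P t)
    (hdiff : DifferentiableOn ℝ P (Set.Ioi 0)) {α : ℝ} (hα : α ≠ 0) :
    DifferentiableAt ℝ P α := by
  rcases hα.lt_or_gt with h | h
  · have h1 : DifferentiableAt ℝ P (-α) :=
      (hdiff (-α) (by simpa using h)).differentiableAt (Ioi_mem_nhds (by linarith))
    have h2 : DifferentiableAt ℝ (fun x : ℝ => P (-x)) α :=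
      h1.comp α differentiable_neg.differentiableAt
    have : P = fun x : ℝ => P (-x) := funext fun x => (heven x).symm
    rw [this]; exact h2
  · exact (hdiff α h).differentiableAt (Ioi_mem_nhds h)

lemma sign_mul_self' {γ : ℝ} (hγ : γ ≠ 0) : Real.sign γ * γ = |γ| := by
  rcases hγ.lt_or_gt with h | h
  · rw [Real.sign_of_neg h, abs_of_neg h]; ring
  · rw [Real.sign_of_pos h, abs_of_pos h]; ring

lemma dd_zero_scale {P : ℝ → ℝ} (heven : ∀ t, P (-t) = P t) (hzero : P 0 = 0)
    {c : ℝ} (hc : HasDirDeriv P 0 1 c) (t : ℝ) : HasDirDeriv P 0 t (c * |t|) := by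
  rcases eq_or_ne t 0 with rfl | ht
  · simp only [abs_zero, mul_zero]
    exact Filter.Tendsto.congr (fun ε => by simp [hzero]) tendsto_const_nhds
  · have habs : 0 < |t| := abs_pos.mpr ht
    have h1 := hc.comp (tendsto_mul_pos habs)
    have h2 := h1.const_mul |t|
    rw [show c * |t| = |t| * c from mul_comm _ _]
    refine h2.congr' ?_
    filter_upwards [eventually_mem_nhdsWithin] with ε (hε : (0:ℝ) < ε)
    have hPt : P (ε * t) = P (ε * |t|) := by
      rcases ht.lt_or_gt with h | h
      · rw [abs_of_neg h, mul_neg]; exact (heven _).symm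
      · rw [abs_of_pos h]
    simp only [Function.comp, smul_eq_mul, mul_one, zero_add, hzero, sub_zero]
    rw [hPt]
    field_simp

/-- GBF of the map β ↦ Δ_P(β,α) in one dimension. -/
theorem gbf_of_penalty_gbf (P : ℝ → ℝ)
    (heven : ∀ t, P (-t) = P t) (hnonneg : ∀ t, 0 ≤ P t) (hzero : P 0 = 0)
    (hdiff : DifferentiableOn ℝ P (Set.Ioi 0))
    (δP : ℝ → ℝ → ℝ) (hδP : ∀ γ h : ℝ, HasDirDeriv P γ h (δP γ h))
    (δq : ℝ → ℝ → ℝ → ℝ)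
    (hδq : ∀ α γ h : ℝ,
      HasDirDeriv (fun x => P x - P α - δP α (x - α)) γ h (δq α γ h))
    (δA : ℝ → ℝ → ℝ → ℝ)
    (hδA : ∀ α γ h : ℝ, HasDirDeriv (fun x => absGBF x α) γ h (δA α γ h)) :
    ∀ α β γ : ℝ,
      ((P β - P α - δP α (β - α)) - (P γ - P α - δP α (γ - α)) - δq α γ (β - γ)
        = (P β - P γ - δP γ (β - γ))
          - δP 0 1 * absGBF β γ * (if α = 0 then 1 else 0)) ∧
      (absGBF β α - absGBF γ α - δA α γ (β - γ)
        = absGBF β γ * (if α ≠ 0 then 1 else 0)) := by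
  intro α β γ
  have hδP0 : ∀ t, δP 0 t = δP 0 1 * |t| :=
    fun t => dd_unique (hδP 0 t) (dd_zero_scale heven hzero (hδP 0 1) t)
  constructor
  · by_cases hα : α = 0
    · subst hα
      have hqfun : (fun x => P x - P 0 - δP 0 (x - 0)) = fun x => P x - δP 0 1 * |x| := by
        funext x; rw [hδP0 (x - 0), hzero]; simp
      have hq : HasDirDeriv (fun x => P x - P 0 - δP 0 (x - 0)) γ (β - γ)
          (δP γ (β - γ) - δP 0 1 * (if γ = 0 then |β - γ| else Real.sign γ * (β - γ))) := by
        rw [hqfun]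
        exact dd_sub (hδP γ (β - γ)) (dd_const_mul (δP 0 1) (dd_abs γ (β - γ)))
      have hδqval := dd_unique (hδq 0 γ (β - γ)) hq
      rw [hδqval, hδP0 (β - 0), hδP0 (γ - 0), if_pos rfl, hzero]
      rcases eq_or_ne γ 0 with rfl | hγ
      · rw [hδP0 (β - 0)]
        simp [absGBF, hzero]
      · rw [if_neg hγ]
        simp only [absGBF, if_neg hγ, sub_zero]
        have hs := sign_mul_self' hγ
        linear_combination (-(δP 0 1)) * hs
    · have hPd := (P_diffAt heven hdiff hα).hasDerivAt
      have hlin : ∀ t, δP α t = deriv P α * t :=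
        fun t => dd_unique (hδP α t) (dd_of_hasDerivAt hPd t)
      have hqfun : (fun x => P x - P α - δP α (x - α))
          = fun x => P x - (P α + deriv P α * (x - α)) := by
        funext x; rw [hlin]; ring
      have haff : HasDerivAt (fun x : ℝ => P α + deriv P α * (x - α)) (deriv P α) γ := by
        simpa using (((hasDerivAt_id γ).sub_const α).const_mul (deriv P α)).const_add (P α)
      have hq : HasDirDeriv (fun x => P x - P α - δP α (x - α)) γ (β - γ)
          (δP γ (β - γ) - deriv P α * (β - γ)) := by
        rw [hqfun]
        exact dd_sub (hδP γ (β - γ)) (dd_of_hasDerivAt haff (β - γ))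
      have hδqval := dd_unique (hδq α γ (β - γ)) hq
      rw [hδqval, hlin (β - α), hlin (γ - α), if_neg hα]
      ring
  · by_cases hα : α = 0
    · subst hα
      have hAfun : (fun x => absGBF x 0) = fun _ => (0:ℝ) := by
        funext x; simp [absGBF]
      have hA : HasDirDeriv (fun x => absGBF x 0) γ (β - γ) 0 := by
        rw [hAfun]
        exact Filter.Tendsto.congr (fun ε => by simp) tendsto_const_nhds
      have hval := dd_unique (hδA 0 γ (β - γ)) hA
      simp [absGBF, hval]
    · have hAfun : (fun x => absGBF x α) = fun x => |x| - Real.sign α * x := by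
        funext x; simp [absGBF, if_neg hα]
      have hA : HasDirDeriv (fun x => absGBF x α) γ (β - γ)
          ((if γ = 0 then |β - γ| else Real.sign γ * (β - γ)) - Real.sign α * (β - γ)) := by
        rw [hAfun]
        refine dd_sub (dd_abs γ (β - γ)) ?_
        have hl : HasDerivAt (fun x : ℝ => Real.sign α * x) (Real.sign α) γ := by
          simpa using (hasDerivAt_id γ).const_mul (Real.sign α)
        simpa using dd_of_hasDerivAt hl (β - γ)
      have hval := dd_unique (hδA α γ (β - γ)) hA
      rw [hval, if_pos hα]
      simp only [absGBF, if_neg hα]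
      rcases eq_or_ne γ 0 with rfl | hγ
      · simp
      · rw [if_neg hγ, if_neg hγ]
        have hs := sign_mul_self' hγ
        linear_combination hs
end
end

section
/- One step of Nesterov-type second acceleration obeys a Lyapunov decrease: in the scheme γ^{(t)} = (1−θ_t)β^{(t)} + θ_t α^{(t)}, α^{(t+1)} ∈ argmin_β [f(β) − Δ_{ψ₀}(β,γ^{(t)}) + θ_t ρ_t Δ_φ(β,α^{(t)})] (with μ₀ = 0), β^{(t+1)} = (1−θ_t)β^{(t)} + θ_t α^{(t+1)}, one has for any β: f(β^{(t+1)}) − f(β) − (1−θ_t)[f(β^{(t)}) − f(β)] + θ_t Δ_{ψ₀}(β,γ^{(t)}) + θ_t(Δ_{f(·)−Δ_{ψ₀}(·,γ^{(t)})} + θ_t ρ_t Δ_{Δ_φ(·,α^{(t)})−φ})(β,α^{(t+1)}) + R_t ≤ θ_t²ρ_t [Δ_φ(β,α^{(t)}) − Δ_φ(β,α^{(t+1)})], where R_t = θ_t²ρ_t Δ_φ(α^{(t+1)},α^{(t)}) − Δ_{ψ₀}(β^{(t+1)},γ^{(t)}) + (1−θ_t)Δ_{ψ₀}(β^{(t)},γ^{(t)})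 + C_{f(·)−Δ_{ψ₀}(·,γ^{(t)})}(α^{(t+1)},β^{(t)},θ_t). -/
open Filter Topology Set

noncomputable section

lemma HasDirDeriv.addFn {E : Type*} [AddCommGroup E] [Module ℝ E] {ψ χ : E → ℝ} {β h : E}
    {d e : ℝ} (h1 : HasDirDeriv ψ β h d) (h2 : HasDirDeriv χ β h e) :
    HasDirDeriv (fun x => ψ x + χ x) β h (d + e) :=
  (h1.add h2).congr (fun ε => by ring)

lemma HasDirDeriv.constMulFn {E : Type*} [AddCommGroup E] [Module ℝ E] {ψ : E → ℝ} {β h : E}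
    {d : ℝ} (c : ℝ) (h1 : HasDirDeriv ψ β h d) :
    HasDirDeriv (fun x => c * ψ x) β h (c * d) :=
  (h1.const_mul c).congr (fun ε => by ring)

lemma HasDirDeriv.nonneg_of_min {E : Type*} [AddCommGroup E] [Module ℝ E] {ψ : E → ℝ} {β h : E}
    {d : ℝ} (h1 : HasDirDeriv ψ β h d) (hmin : ∀ x, ψ β ≤ ψ x) : 0 ≤ d := by
  refine ge_of_tendsto h1 ?_
  filter_upwards [self_mem_nhdsWithin] with ε (hε : 0 < ε)
  exact div_nonneg (by linarith [hmin (β + ε • h)]) hε.le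

/-- One step of the Nesterov-type second acceleration (with μ₀ = 0) satisfies a Lyapunov
decrease with residual term R_t. -/
theorem second_acceleration_step {p : ℕ}
    (f ψ₀ φ : (Fin p → ℝ) → ℝ)
    (δf δψ₀ δφ : (Fin p → ℝ) → (Fin p → ℝ) → ℝ)
    (hf : ∀ β h, HasDirDeriv f β h (δf β h))
    (hψ₀ : ∀ β h, HasDirDeriv ψ₀ β h (δψ₀ β h))
    (hφ : ∀ β h, HasDirDeriv φ β h (δφ β h))
    (θ ρ : ℝ) (hθ : θ ∈ Set.Ioc (0:ℝ) 1) (hρ : 0 < ρ)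
    (βt αt γt αt1 βt1 : Fin p → ℝ)
    (hγ : γt = (1 - θ) • βt + θ • αt)
    (hβ1 : βt1 = (1 - θ) • βt + θ • αt1)
    (hmin : ∀ x : Fin p → ℝ,
      f αt1 - GBF ψ₀ δψ₀ αt1 γt + θ * ρ * GBF φ δφ αt1 αt
        ≤ f x - GBF ψ₀ δψ₀ x γt + θ * ρ * GBF φ δφ x αt)
    (δh : (Fin p → ℝ) → (Fin p → ℝ) → ℝ)
    (hh : ∀ β h, HasDirDeriv (fun x => f x - GBF ψ₀ δψ₀ x γt) β h (δh β h))
    (δk : (Fin p → ℝ) → (Fin p → ℝ) → ℝ)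
    (hk : ∀ β h, HasDirDeriv (fun x => GBF φ δφ x αt - φ x) β h (δk β h)) :
    ∀ β : Fin p → ℝ,
      f βt1 - f β - (1 - θ) * (f βt - f β)
        + θ * GBF ψ₀ δψ₀ β γt
        + θ * (GBF (fun x => f x - GBF ψ₀ δψ₀ x γt) δh β αt1
               + θ * ρ * GBF (fun x => GBF φ δφ x αt - φ x) δk β αt1)
        + (θ ^ 2 * ρ * GBF φ δφ αt1 αt
           - GBF ψ₀ δψ₀ βt1 γt
           + (1 - θ) * GBF ψ₀ δψ₀ βt γt
           + (θ * (f αt1 - GBF ψ₀ δψ₀ αt1 γt)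
              + (1 - θ) * (f βt - GBF ψ₀ δψ₀ βt γt)
              - (f (θ • αt1 + (1 - θ) • βt)
                  - GBF ψ₀ δψ₀ (θ • αt1 + (1 - θ) • βt) γt)))
      ≤ θ ^ 2 * ρ * (GBF φ δφ β αt - GBF φ δφ β αt1) := by
  intro β
  have hm : θ • αt1 + (1 - θ) • βt = βt1 := by rw [hβ1]; abel
  set b := β - αt1 with hb
  have hF : HasDirDeriv (fun x => (f x - GBF ψ₀ δψ₀ x γt)
      + θ * ρ * ((GBF φ δφ x αt - φ x) + φ x)) αt1 b
      (δh αt1 b + θ * ρ * (δk αt1 b + δφ αt1 b)) :=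
    (hh αt1 b).addFn (((hk αt1 b).addFn (hφ αt1 b)).constMulFn (θ * ρ))
  have hD : 0 ≤ δh αt1 b + θ * ρ * (δk αt1 b + δφ αt1 b) := by
    refine hF.nonneg_of_min (fun x => ?_)
    have := hmin x
    ring_nf
    ring_nf at this
    linarith
  have key : 0 ≤ θ * (δh αt1 b + θ * ρ * (δk αt1 b + δφ αt1 b)) :=
    mul_nonneg hθ.1.le hD
  rw [hm]
  simp only [GBF] at key ⊢
  linarith [key]
end
end
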